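/- Under the hypotheses of the fixed-point statement (t < T_c), the map φ_t(x,y) = ((1+t)x − t∂g₀/∂y(x,y), (1+t)y − t∂g₀/∂x(x,y)) restricted to K_t = φ_t⁻¹([0,1]²) is a bijection onto [0,1]², and its inverse h_t : [0,1]² → K_t is continuous. -/

import Mathlib

open Set Function Filter Topology
open scoped NNReal

/-!
Write `V = (∂_y g₀, ∂_x g₀)`. The equation `φ p = w` says that `p` is a fixed point of
`p ↦ (w + t V p) / (1 + t)`, which maps the unit square `Q` into itself, being a convex
combination of `w` and `V p`. By the mean value theorem and the symmetry of `∂_x ∂_y g₀`, `V` is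
`(α + a b)`-Lipschitz on `Q` for the weighted norm `max (a |x|, b |y|)` as soon as `γ ≤ a²` and
`β ≤ b²`. Taking `a, b` slightly above `√γ, √β` makes the fixed-point map a contraction, so for
each `w ∈ Q` there is exactly one solution `p ∈ Q`. Thus `φ` maps `K` bijectively onto `Q`, and
its inverse is continuous because `K` is compact.
-/

theorem fderiv_fderiv_apply_comm {E F : Type*} [NormedAddCommGroup E] [NormedSpace ℝ E]
    [NormedAddCommGroup F] [NormedSpace ℝ F] {g : E → F} (hg : ContDiff ℝ 2 g) (p v w : E) :
    fderiv ℝ (fun q => fderiv ℝ g q v) p w = fderiv ℝ (fun q => fderiv ℝ g q w) p v := by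
  have hdiff : DifferentiableAt ℝ (fderiv ℝ g) p :=
    (hg.fderiv_right (m := 1) (by norm_num)).differentiable one_ne_zero p
  simp only [fderiv_clm_apply hdiff (differentiableAt_const _), fderiv_const_apply,
    ContinuousLinearMap.comp_zero, ContinuousLinearMap.flip_apply, zero_add]
  exact hg.contDiffAt.isSymmSndFDerivAt (by simp) w v

theorem ContDiff.differentiable_fderiv_apply {E F : Type*} [NormedAddCommGroup E]
    [NormedSpace ℝ E] [NormedAddCommGroup F] [NormedSpace ℝ F] {g : E → F}
    (hg : ContDiff ℝ 2 g) (v : E) : Differentiable ℝ (fun q => fderiv ℝ g q v) :=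
  ((hg.fderiv_right (m := 1) (by norm_num)).clm_apply contDiff_const).differentiable one_ne_zero

theorem abs_sub_le_of_abs_fderiv_apply_le {G : ℝ × ℝ → ℝ} {s : Set (ℝ × ℝ)} (hs : Convex ℝ s)
    (hG : ∀ r ∈ s, DifferentiableAt ℝ G r) {A B : ℝ}
    (hA : ∀ r ∈ s, |fderiv ℝ G r (1, 0)| ≤ A) (hB : ∀ r ∈ s, |fderiv ℝ G r (0, 1)| ≤ B)
    {p q : ℝ × ℝ} (hp : p ∈ s) (hq : q ∈ s) :
    |G q - G p| ≤ A * |q.1 - p.1| + B * |q.2 - p.2| := by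
  obtain ⟨r, hr, hGr⟩ :=
    domain_mvt (fun r hr => (hG r hr).hasFDerivAt.hasFDerivWithinAt) hs hp hq
  have hrs : r ∈ s := hs.segment_subset hp hq hr
  have hqp : q - p = (q.1 - p.1) • ((1 : ℝ), (0 : ℝ)) + (q.2 - p.2) • ((0 : ℝ), (1 : ℝ)) := by
    ext <;> simp
  rw [hGr, hqp, map_add, map_smul, map_smul, smul_eq_mul, smul_eq_mul]
  calc _ ≤ |q.1 - p.1| * |fderiv ℝ G r (1, 0)| + |q.2 - p.2| * |fderiv ℝ G r (0, 1)| := by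
        simpa only [abs_mul] using abs_add_le ((q.1 - p.1) * fderiv ℝ G r (1, 0))
          ((q.2 - p.2) * fderiv ℝ G r (0, 1))
    _ ≤ |q.1 - p.1| * A + |q.2 - p.2| * B := by
        gcongr
        exacts [hA r hrs, hB r hrs]
    _ = A * |q.1 - p.1| + B * |q.2 - p.2| := by ring

theorem max_mul_abs_le_mul_max {a b α β γ x y u v : ℝ} (ha : 0 ≤ a) (hb : 0 ≤ b) (hα : 0 ≤ α)
    (hγ : γ ≤ a ^ 2) (hβ : β ≤ b ^ 2) (hu : |u| ≤ α * |x| + β * |y|)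
    (hv : |v| ≤ γ * |x| + α * |y|) :
    max (a * |u|) (b * |v|) ≤ (α + a * b) * max (a * |x|) (b * |y|) := by
  have hx : a * |x| ≤ max (a * |x|) (b * |y|) := le_max_left _ _
  have hy : b * |y| ≤ max (a * |x|) (b * |y|) := le_max_right _ _
  have hab : 0 ≤ a * b := mul_nonneg ha hb
  apply max_le
  · calc a * |u| ≤ α * (a * |x|) + a * b * (b * |y|) := by
          nlinarith [mul_le_mul_of_nonneg_left hu ha, mul_le_mul_of_nonneg_right hβ (abs_nonneg y)]
      _ ≤ _ := by nlinarith [mul_le_mul_of_nonneg_left hx hα, mul_le_mul_of_nonneg_left hy hab]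
  · calc b * |v| ≤ a * b * (a * |x|) + α * (b * |y|) := by
          nlinarith [mul_le_mul_of_nonneg_left hv hb, mul_le_mul_of_nonneg_right hγ (abs_nonneg x)]
      _ ≤ _ := by nlinarith [mul_le_mul_of_nonneg_left hx hab, mul_le_mul_of_nonneg_left hy hα]

noncomputable def diagScaling {a b : ℝ} (ha : 0 < a) (hb : 0 < b) : (ℝ × ℝ) ≃L[ℝ] ℝ × ℝ :=
  (ContinuousLinearEquiv.smulLeft (Units.mk0 a ha.ne')).prodCongr
    (ContinuousLinearEquiv.smulLeft (Units.mk0 b hb.ne'))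

theorem norm_diagScaling {a b : ℝ} (ha : 0 < a) (hb : 0 < b) (p : ℝ × ℝ) :
    ‖diagScaling ha hb p‖ = max (a * |p.1|) (b * |p.2|) := by
  simp [diagScaling, Prod.norm_def, Units.smul_def, abs_of_pos ha, abs_of_pos hb]

noncomputable def swappedGrad (g : ℝ × ℝ → ℝ) (z : ℝ × ℝ) : ℝ × ℝ :=
  (fderiv ℝ g z (0, 1), fderiv ℝ g z (1, 0))

theorem norm_diagScaling_swappedGrad_sub_le {g : ℝ × ℝ → ℝ} (hg : ContDiff ℝ 2 g)
    {s : Set (ℝ × ℝ)} (hs : Convex ℝ s) {α β γ a b : ℝ} (ha : 0 < a) (hb : 0 < b) (hα0 : 0 ≤ α)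
    (hγa : γ ≤ a ^ 2) (hβb : β ≤ b ^ 2)
    (hα : ∀ r ∈ s, |fderiv ℝ (fun q => fderiv ℝ g q (1, 0)) r (0, 1)| ≤ α)
    (hβ : ∀ r ∈ s, |fderiv ℝ (fun q => fderiv ℝ g q (0, 1)) r (0, 1)| ≤ β)
    (hγ : ∀ r ∈ s, |fderiv ℝ (fun q => fderiv ℝ g q (1, 0)) r (1, 0)| ≤ γ)
    {p q : ℝ × ℝ} (hp : p ∈ s) (hq : q ∈ s) :
    ‖diagScaling ha hb (swappedGrad g p) - diagScaling ha hb (swappedGrad g q)‖ ≤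
      (α + a * b) * ‖diagScaling ha hb p - diagScaling ha hb q‖ := by
  have hu := abs_sub_le_of_abs_fderiv_apply_le hs
    (fun r _ => hg.differentiable_fderiv_apply (0, 1) r)
    (fun r hr => by rw [fderiv_fderiv_apply_comm hg]; exact hα r hr) hβ hq hp
  have hv := abs_sub_le_of_abs_fderiv_apply_le hs
    (fun r _ => hg.differentiable_fderiv_apply (1, 0) r) hγ hα hq hp
  rw [← map_sub, ← map_sub, norm_diagScaling, norm_diagScaling]
  exact max_mul_abs_le_mul_max ha.le hb.le hα0 hγa hβb hu hv

theorem exists_le_sq_le_sq_mul_mem {β γ : ℝ} (hβ : 0 ≤ β) (hγ : 0 ≤ γ) {U : Set ℝ}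
    (hU : U ∈ 𝓝 (√(β * γ))) :
    ∃ a b : ℝ, 0 < a ∧ 0 < b ∧ γ ≤ a ^ 2 ∧ β ≤ b ^ 2 ∧ a * b ∈ U := by
  have hlim : Tendsto (fun δ => √(γ + δ) * √(β + δ)) (𝓝[>] 0) (𝓝 (√(β * γ))) := by
    have hcont : Continuous (fun δ => √(γ + δ) * √(β + δ)) := by fun_prop
    rw [Real.sqrt_mul hβ, mul_comm]
    simpa using (hcont.tendsto 0).mono_left nhdsWithin_le_nhds
  obtain ⟨δ, hδU, hδ⟩ := ((hlim.eventually hU).and self_mem_nhdsWithin).exists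
  refine ⟨√(γ + δ), √(β + δ), by positivity, by positivity, ?_, ?_, hδU⟩
  · rw [Real.sq_sqrt (by linarith)]; linarith
  · rw [Real.sq_sqrt (by linarith)]; linarith

theorem exists_isFixedPt_of_lipschitzOnWith {X : Type*} [MetricSpace X] [CompleteSpace X]
    {s : Set X} (hs : IsClosed s) (hne : s.Nonempty) {f : X → X} (hf : MapsTo f s s) {K : ℝ≥0}
    (hK : K < 1) (hlip : LipschitzOnWith K f s) : ∃ x ∈ s, IsFixedPt f x := by
  obtain ⟨x, hx⟩ := hne
  obtain ⟨y, hy, hfix, -⟩ := ContractingWith.exists_fixedPoint' hs.isComplete hf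
    ⟨hK, hlip.mapsToRestrict hf⟩ hx (edist_ne_top _ _)
  exact ⟨y, hy, hfix⟩

theorem existsUnique_one_add_smul_sub_smul_eq {E F : Type*} [NormedAddCommGroup E]
    [NormedSpace ℝ E] [NormedAddCommGroup F] [NormedSpace ℝ F] [CompleteSpace F] (e : E ≃L[ℝ] F)
    {Q : Set E} (hQc : IsClosed Q) (hQ : Convex ℝ Q) {V : E → E} (hVQ : MapsTo V Q Q)
    {t L : ℝ} (ht : 0 ≤ t) (hL : t * L < 1 + t)
    (hV : ∀ p ∈ Q, ∀ q ∈ Q, ‖e (V p) - e (V q)‖ ≤ L * ‖e p - e q‖) {w : E} (hw : w ∈ Q) :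
    ∃! p, p ∈ Q ∧ (1 + t) • p - t • V p = w := by
  have ht1 : 0 < 1 + t := by linarith
  set T : E → E := fun p => (1 + t)⁻¹ • (w + t • V p)
  set k : ℝ := (1 + t)⁻¹ * t * L with hk_def
  have hk : k < 1 := by rwa [hk_def, mul_assoc, inv_mul_lt_iff₀ ht1, mul_one]
  have hfix : ∀ p, T p = p ↔ (1 + t) • p - t • V p = w := by
    intro p
    rw [sub_eq_iff_eq_add, inv_smul_eq_iff₀ ht1.ne', eq_comm]
  have hTQ : MapsTo T Q Q := fun p hp => by
    simp only [T, smul_add, smul_smul]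
    exact hQ hw (hVQ hp) (by positivity) (by positivity) (by field_simp)
  have hT : ∀ p ∈ Q, ∀ q ∈ Q, ‖e (T p) - e (T q)‖ ≤ k * ‖e p - e q‖ := by
    intro p hp q hq
    have hTpq : e (T p) - e (T q) = ((1 + t)⁻¹ * t) • (e (V p) - e (V q)) := by
      simp only [T, map_smul, map_add, smul_add, smul_sub, smul_smul]; abel
    rw [hTpq, norm_smul, Real.norm_of_nonneg (by positivity), mul_assoc _ L]
    exact mul_le_mul_of_nonneg_left (hV p hp q hq) (by positivity)
  obtain ⟨p', hp'Q, hp'⟩ : ∃ p' ∈ e.symm ⁻¹' Q, IsFixedPt (e ∘ T ∘ e.symm) p' := by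
    refine exists_isFixedPt_of_lipschitzOnWith (hQc.preimage e.symm.continuous)
      ⟨e w, by simpa using hw⟩ (fun p' hp' => by simpa using hTQ hp')
      (Real.toNNReal_lt_one.2 hk) (LipschitzOnWith.of_dist_le_mul fun p' hp' q' hq' => ?_)
    calc dist (e (T (e.symm p'))) (e (T (e.symm q')))
        ≤ k * dist p' q' := by simpa [dist_eq_norm] using hT _ hp' _ hq'
      _ ≤ Real.toNNReal k * dist p' q' := by gcongr; exact Real.le_coe_toNNReal k
  have hTp : T (e.symm p') = e.symm p' := (e.symm_apply_eq.2 hp'.symm).symm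
  refine ⟨e.symm p', ⟨hp'Q, (hfix _).1 hTp⟩, fun q ⟨hqQ, hq⟩ => ?_⟩
  have hclose := hT q hqQ _ hp'Q
  rw [(hfix q).2 hq, hTp] at hclose
  have : ‖e q - e (e.symm p')‖ = 0 := by nlinarith [norm_nonneg (e q - e (e.symm p'))]
  exact e.injective (sub_eq_zero.1 (norm_eq_zero.1 this))

theorem IsClosedMap.continuousOn_image_of_leftInvOn {α β : Type*} [TopologicalSpace α]
    [TopologicalSpace β] {f : α → β} {s : Set α} (h : IsClosedMap (s.domRestrict f))
    {finv : β → α} (hleft : LeftInvOn finv f s) : ContinuousOn finv (f '' s) := by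
  refine continuousOn_iff_isClosed.2 fun t ht => ⟨f '' (t ∩ s), ?_, ?_⟩
  · rw [← image_domRestrict]
    exact h _ (ht.preimage continuous_subtype_val)
  · rw [inter_eq_self_of_subset_left (image_mono inter_subset_right), hleft.image_inter']

theorem Set.BijOn.continuousOn_invFunOn {α β : Type*} [TopologicalSpace α] [TopologicalSpace β]
    [T2Space β] [Nonempty α] {f : α → β} {s : Set α} {t : Set β} (h : BijOn f s t)
    (hs : IsCompact s) (hf : ContinuousOn f s) : ContinuousOn (invFunOn f s) t := by
  have : CompactSpace s := isCompact_iff_compactSpace.1 hs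
  rw [← h.image_eq]
  exact (continuousOn_iff_continuous_domRestrict.1 hf).isClosedMap.continuousOn_image_of_leftInvOn
    h.injOn.leftInvOn_invFunOn

theorem bijOn_inter_preimage_of_existsUnique {α β : Type*} {f : α → β} {s : Set α} {t : Set β}
    (h : ∀ y ∈ t, ∃! x, x ∈ s ∧ f x = y) : BijOn f (s ∩ f ⁻¹' t) t := by
  refine ⟨fun x hx => hx.2, fun x hx x' hx' hxx' => ?_, fun y hy => ?_⟩
  · exact (h _ hx.2).unique ⟨hx.1, rfl⟩ ⟨hx'.1, hxx'.symm⟩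
  · obtain ⟨x, ⟨hxs, hxy⟩, -⟩ := h y hy
    exact ⟨x, ⟨hxs, by rwa [mem_preimage, hxy]⟩, hxy⟩

/-- for t < T_c, the map
φ_t(x,y) = ((1+t)x − t·∂g₀/∂y(x,y), (1+t)y − t·∂g₀/∂x(x,y)),
restricted to K_t = φ_t⁻¹([0,1]²) (inside [0,1]²), is a bijection onto [0,1]²
with continuous inverse h_t : [0,1]² → K_t. -/
theorem phi_homeomorphism (g₀ : ℝ × ℝ → ℝ) (hg : ContDiff ℝ 2 g₀)
    (t α β γ : ℝ) (ht : 0 ≤ t)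
    (hx01 : ∀ p ∈ Set.Icc ((0:ℝ), (0:ℝ)) (1, 1), fderiv ℝ g₀ p (1, 0) ∈ Set.Icc (0:ℝ) 1)
    (hy01 : ∀ p ∈ Set.Icc ((0:ℝ), (0:ℝ)) (1, 1), fderiv ℝ g₀ p (0, 1) ∈ Set.Icc (0:ℝ) 1)
    (hα : ∀ p ∈ Set.Icc ((0:ℝ), (0:ℝ)) (1, 1),
      fderiv ℝ (fun q => fderiv ℝ g₀ q (1, 0)) p (0, 1) ∈ Set.Icc (0:ℝ) α)
    (hβ : ∀ p ∈ Set.Icc ((0:ℝ), (0:ℝ)) (1, 1),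
      fderiv ℝ (fun q => fderiv ℝ g₀ q (0, 1)) p (0, 1) ∈ Set.Icc (0:ℝ) β)
    (hγ : ∀ p ∈ Set.Icc ((0:ℝ), (0:ℝ)) (1, 1),
      fderiv ℝ (fun q => fderiv ℝ g₀ q (1, 0)) p (1, 0) ∈ Set.Icc (0:ℝ) γ)
    (hcrit : t * (α + Real.sqrt (β * γ)) / (1 + t) < 1)
    (φ : ℝ × ℝ → ℝ × ℝ)
    (hφ : ∀ z : ℝ × ℝ, φ z =
      ((1 + t) * z.1 - t * fderiv ℝ g₀ z (0, 1), (1 + t) * z.2 - t * fderiv ℝ g₀ z (1, 0)))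
    (K : Set (ℝ × ℝ))
    (hK : K = Set.Icc ((0:ℝ), (0:ℝ)) (1, 1) ∩ φ ⁻¹' Set.Icc ((0:ℝ), (0:ℝ)) (1, 1)) :
    Set.BijOn φ K (Set.Icc ((0:ℝ), (0:ℝ)) (1, 1)) ∧
    ∃ h : ℝ × ℝ → ℝ × ℝ, ContinuousOn h (Set.Icc ((0:ℝ), (0:ℝ)) (1, 1)) ∧
      ∀ w ∈ Set.Icc ((0:ℝ), (0:ℝ)) (1, 1), h w ∈ K ∧ φ (h w) = w := by
  set Q := Set.Icc ((0:ℝ), (0:ℝ)) (1, 1)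
  have h0 : ((0:ℝ), (0:ℝ)) ∈ Q := left_mem_Icc.2 (by norm_num [Prod.le_def])
  have hα0 : 0 ≤ α := (hα _ h0).1.trans (hα _ h0).2
  have hβ0 : 0 ≤ β := (hβ _ h0).1.trans (hβ _ h0).2
  have hγ0 : 0 ≤ γ := (hγ _ h0).1.trans (hγ _ h0).2
  have habs : ∀ {x c : ℝ}, x ∈ Icc 0 c → |x| ≤ c := fun h => (abs_of_nonneg h.1).trans_le h.2
  obtain ⟨a, b, ha, hb, hγa, hβb, hab⟩ := exists_le_sq_le_sq_mul_mem hβ0 hγ0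
    (U := {x | t * (α + x) < 1 + t}) ((isOpen_lt (by fun_prop) continuous_const).mem_nhds
      ((div_lt_one (by linarith)).1 hcrit))
  have hV := fun p (hp : p ∈ Q) q (hq : q ∈ Q) => norm_diagScaling_swappedGrad_sub_le hg
    (convex_Icc _ _) ha hb hα0 hγa hβb (fun r hr => habs (hα r hr)) (fun r hr => habs (hβ r hr))
    (fun r hr => habs (hγ r hr)) hp hq
  have hVQ : MapsTo (swappedGrad g₀) Q Q := fun z hz =>
    ⟨⟨(hy01 z hz).1, (hx01 z hz).1⟩, ⟨(hy01 z hz).2, (hx01 z hz).2⟩⟩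
  have hφV : φ = fun z => (1 + t) • z - t • swappedGrad g₀ z :=
    funext fun z => by ext <;> simp [hφ, swappedGrad]
  have hφc : Continuous φ := by
    have : Continuous (swappedGrad g₀) := (hg.differentiable_fderiv_apply (0, 1)).continuous.prodMk
      (hg.differentiable_fderiv_apply (1, 0)).continuous
    rw [hφV]; fun_prop
  have hsolve : ∀ w ∈ Q, ∃! p, p ∈ Q ∧ φ p = w := fun w hw => hφV ▸
    existsUnique_one_add_smul_sub_smul_eq _ isClosed_Icc (convex_Icc _ _) hVQ ht hab hV hw
  have hbij : BijOn φ K Q := hK ▸ bijOn_inter_preimage_of_existsUnique hsolve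
  have hKc : IsCompact K := hK ▸ isCompact_Icc.inter_right (isClosed_Icc.preimage hφc)
  exact ⟨hbij, invFunOn φ K, hbij.continuousOn_invFunOn hKc hφc.continuousOn,
    fun w hw => ⟨hbij.surjOn.mapsTo_invFunOn hw, hbij.surjOn.rightInvOn_invFunOn hw⟩⟩
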